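/- For all v ∈ A and e, h ∈ V, the fiber derivatives of the vertical and horizontal projections exist and satisfy d/dt|_{t=0} (e^⊤_{v+th}) = 2·(C♯_v(e^⊥_v, h))^⊤_v and d/dt|_{t=0} (e^⊥_{v+th}) = −2·(C♯_v(e^⊥_v, h))^⊤_v. In particular, both fiber derivatives vanish when e ∈ 𝒱. -/

import Mathlib

/-- Pseudo-Finsler data on a real normed vector space `V`: an open conic set `A` of
admissible vectors avoiding `0`, a positively `2`-homogeneous function `L` smooth on `A`,
and the fundamental tensor `g`, given by the second fiber derivative of `L`, which is
required to be symmetric and nondegenerate at every admissible vector. -/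
structure PseudoFinslerData (V : Type*) [NormedAddCommGroup V] [NormedSpace ℝ V] where
  A : Set V
  L : V → ℝ
  g : V → V →ₗ[ℝ] V →ₗ[ℝ] ℝ
  A_ne_zero : ∀ v ∈ A, v ≠ 0
  A_open : IsOpen A
  A_cone : ∀ v ∈ A, ∀ c : ℝ, 0 < c → c • v ∈ A
  L_smooth : ContDiffOn ℝ (⊤ : ℕ∞) L A
  L_homog : ∀ v ∈ A, ∀ c : ℝ, 0 < c → L (c • v) = c ^ 2 * L v
  g_def : ∀ v ∈ A, ∀ e h : V,
    g v e h = (1 / 2) * deriv (fun s : ℝ => deriv (fun t : ℝ => L (v + s • e + t • h)) 0) 0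
  g_symm : ∀ v ∈ A, ∀ e h : V, g v e h = g v h e
  g_nondeg : ∀ v ∈ A, ∀ e : V, (∀ h : V, g v e h = 0) → e = 0

/-- The Cartan tensor of pseudo-Finsler data:
`C_v(b,e,h) = (1/4)·∂³/∂r∂s∂t L(v+rb+se+th)|₀`. -/
noncomputable def PseudoFinslerData.Cartan {V : Type*} [NormedAddCommGroup V]
    [NormedSpace ℝ V] (D : PseudoFinslerData V) (v b e h : V) : ℝ :=
  (1 / 4) * deriv (fun r : ℝ =>
    deriv (fun s : ℝ => deriv (fun t : ℝ => D.L (v + r • b + s • e + t • h)) 0) 0) 0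

open ContinuousLinearMap Filter Topology
set_option maxHeartbeats 1000000

namespace PFAux

variable {V : Type*} [NormedAddCommGroup V] [NormedSpace ℝ V]

noncomputable def L1 (D : PseudoFinslerData V) : V → V →L[ℝ] ℝ := fderiv ℝ D.L
noncomputable def L2 (D : PseudoFinslerData V) : V → V →L[ℝ] V →L[ℝ] ℝ := fderiv ℝ (L1 D)
noncomputable def L3 (D : PseudoFinslerData V) : V → V →L[ℝ] V →L[ℝ] V →L[ℝ] ℝ :=
  fderiv ℝ (L2 D)

variable {D : PseudoFinslerData V} {v u : V}

lemma L_cd : ContDiffOn ℝ ((⊤ : ℕ∞) : WithTop ℕ∞) D.L D.A := D.L_smooth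

lemma L1_cd : ContDiffOn ℝ ((⊤ : ℕ∞) : WithTop ℕ∞) (L1 D) D.A :=
  L_cd.fderiv_of_isOpen D.A_open (le_of_eq rfl)

lemma L2_cd : ContDiffOn ℝ ((⊤ : ℕ∞) : WithTop ℕ∞) (L2 D) D.A :=
  L1_cd.fderiv_of_isOpen D.A_open (le_of_eq rfl)

lemma hasF_L (hv : v ∈ D.A) : HasFDerivAt D.L (L1 D v) v :=
  ((D.L_smooth.contDiffAt (D.A_open.mem_nhds hv)).differentiableAt (by
    simp)).hasFDerivAt

lemma hasF_L1 (hv : v ∈ D.A) : HasFDerivAt (L1 D) (L2 D v) v :=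
  ((L1_cd.contDiffAt (D.A_open.mem_nhds hv)).differentiableAt (by
    simp)).hasFDerivAt

lemma hasF_L2 (hv : v ∈ D.A) : HasFDerivAt (L2 D) (L3 D v) v :=
  ((L2_cd.contDiffAt (D.A_open.mem_nhds hv)).differentiableAt (by
    simp)).hasFDerivAt

lemma comp_line {F' : Type*} [NormedAddCommGroup F'] [NormedSpace ℝ F'] {f : V → F'}
    {f' : V →L[ℝ] F'} (hf : HasFDerivAt f f' v) (h : V) :
    HasDerivAt (fun t : ℝ => f (v + t • h)) (f' h) 0 := by
  have hline : HasDerivAt (fun t : ℝ => v + t • h) h 0 := by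
    simpa using ((hasDerivAt_id (0 : ℝ)).smul_const h).const_add v
  have hf' : HasFDerivAt f f' ((fun t : ℝ => v + t • h) 0) := by simpa using hf
  exact hf'.comp_hasDerivAt 0 hline

lemma eventually_mem (hu : u ∈ D.A) (e : V) : ∀ᶠ s : ℝ in 𝓝 0, u + s • e ∈ D.A := by
  have hc : Continuous fun s : ℝ => u + s • e := by continuity
  have ht : Tendsto (fun s : ℝ => u + s • e) (𝓝 0) (𝓝 u) := by
    simpa using hc.tendsto 0
  exact ht.eventually_mem (D.A_open.mem_nhds hu)

lemma deriv1_eq (hu : u ∈ D.A) (h : V) :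
    deriv (fun t : ℝ => D.L (u + t • h)) 0 = L1 D u h :=
  (comp_line (hasF_L hu) h).deriv

lemma hasDerivAt_L1_apply (hv : v ∈ D.A) (e h : V) :
    HasDerivAt (fun s : ℝ => L1 D (v + s • e) h) (L2 D v e h) 0 := by
  have hf : HasFDerivAt (fun w => L1 D w h) ((apply ℝ ℝ h).comp (L2 D v)) v :=
    (apply ℝ ℝ h).hasFDerivAt.comp v (hasF_L1 hv)
  simpa using comp_line hf e

lemma hasDerivAt_L2_apply (hv : v ∈ D.A) (b e h : V) :
    HasDerivAt (fun r : ℝ => L2 D (v + r • b) e h) (L3 D v b e h) 0 := by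
  have hf0 : HasFDerivAt (⇑((apply ℝ ℝ h).comp (apply ℝ (V →L[ℝ] ℝ) e)) ∘ L2 D)
      (((apply ℝ ℝ h).comp (apply ℝ (V →L[ℝ] ℝ) e)).comp (L3 D v)) v :=
    by
      have hx := ((hasF_L2 hv).clm_apply (hasFDerivAt_const e v)).clm_apply (hasFDerivAt_const h v)
      convert hx using 1
      · rfl
      · ext b
        simp
      · ext b
        simp
  have hf : HasFDerivAt (fun w => L2 D w e h)
      (((apply ℝ ℝ h).comp (apply ℝ (V →L[ℝ] ℝ) e)).comp (L3 D v)) v := hf0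
  simpa using comp_line hf b

lemma deriv2_eq (hu : u ∈ D.A) (e h : V) :
    deriv (fun s : ℝ => deriv (fun t : ℝ => D.L (u + s • e + t • h)) 0) 0 = L2 D u e h := by
  have hev : (fun s : ℝ => deriv (fun t : ℝ => D.L (u + s • e + t • h)) 0)
      =ᶠ[𝓝 0] fun s : ℝ => L1 D (u + s • e) h := by
    filter_upwards [eventually_mem hu e] with s hs using deriv1_eq hs h
  rw [hev.deriv_eq]
  exact (hasDerivAt_L1_apply hu e h).deriv

lemma g_eq (hv : v ∈ D.A) (e h : V) : D.g v e h = (1 / 2) * L2 D v e h := by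
  rw [D.g_def v hv e h, deriv2_eq hv e h]

lemma Cartan_eq (hv : v ∈ D.A) (b e h : V) :
    D.Cartan v b e h = (1 / 4) * L3 D v b e h := by
  rw [PseudoFinslerData.Cartan]
  congr 1
  have hev : (fun r : ℝ =>
      deriv (fun s : ℝ => deriv (fun t : ℝ => D.L (v + r • b + s • e + t • h)) 0) 0)
      =ᶠ[𝓝 0] fun r : ℝ => L2 D (v + r • b) e h := by
    filter_upwards [eventually_mem hv b] with r hr using deriv2_eq hr e h
  rw [hev.deriv_eq]
  exact (hasDerivAt_L2_apply hv b e h).deriv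

lemma L3_symm12 (hv : v ∈ D.A) (b e : V) : L3 D v b e = L3 D v e b := by
  apply second_derivative_symmetric_of_eventually (f := L1 D) (f' := L2 D) (x := v)
  · filter_upwards [D.A_open.mem_nhds hv] with w hw using hasF_L1 hw
  · exact hasF_L2 hv

lemma L3_symm23 (hv : v ∈ D.A) (b e h : V) : L3 D v b e h = L3 D v b h e := by
  have hev : (fun w => L2 D w e h) =ᶠ[𝓝 v] fun w => L2 D w h e := by
    filter_upwards [D.A_open.mem_nhds hv] with w hw
    exact (D.L_smooth.contDiffAt (D.A_open.mem_nhds hw)).isSymmSndFDerivAt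
      (by rw [minSmoothness_of_isRCLikeNormedField]; norm_cast) e h
  have h10 : HasFDerivAt (⇑((apply ℝ ℝ h).comp (apply ℝ (V →L[ℝ] ℝ) e)) ∘ L2 D)
      (((apply ℝ ℝ h).comp (apply ℝ (V →L[ℝ] ℝ) e)).comp (L3 D v)) v :=
    by
      have hx := ((hasF_L2 hv).clm_apply (hasFDerivAt_const e v)).clm_apply (hasFDerivAt_const h v)
      convert hx using 1
      · rfl
      · ext b
        simp
      · ext b
        simp
  have h1 : HasFDerivAt (fun w => L2 D w e h)
      (((apply ℝ ℝ h).comp (apply ℝ (V →L[ℝ] ℝ) e)).comp (L3 D v)) v := h10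
  have h20 : HasFDerivAt (⇑((apply ℝ ℝ e).comp (apply ℝ (V →L[ℝ] ℝ) h)) ∘ L2 D)
      (((apply ℝ ℝ e).comp (apply ℝ (V →L[ℝ] ℝ) h)).comp (L3 D v)) v :=
    by
      have hx := ((hasF_L2 hv).clm_apply (hasFDerivAt_const h v)).clm_apply (hasFDerivAt_const e v)
      convert hx using 1
      · rfl
      · ext b
        simp
      · ext b
        simp
  have h2 : HasFDerivAt (fun w => L2 D w h e)
      (((apply ℝ ℝ e).comp (apply ℝ (V →L[ℝ] ℝ) h)).comp (L3 D v)) v := h20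
  calc L3 D v b e h = (((apply ℝ ℝ h).comp (apply ℝ (V →L[ℝ] ℝ) e)).comp (L3 D v)) b := rfl
    _ = fderiv ℝ (fun w => L2 D w e h) v b := by rw [h1.fderiv]
    _ = fderiv ℝ (fun w => L2 D w h e) v b := by rw [hev.fderiv_eq]
    _ = L3 D v b h e := by rw [h2.fderiv]; rfl

lemma L3_symm13 (hv : v ∈ D.A) (b e h : V) : L3 D v b e h = L3 D v h e b := by
  have h1 : L3 D v b e h = L3 D v e b h := congrFun (congrArg _ (L3_symm12 hv b e)) h
  have h2 : L3 D v e b h = L3 D v e h b := L3_symm23 hv e b h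
  have h3 : L3 D v e h b = L3 D v h e b := congrFun (congrArg _ (L3_symm12 hv e h)) b
  rw [h1, h2, h3]

end PFAux

open PFAux in
lemma PFmain {V : Type*}
    [NormedAddCommGroup V] [NormedSpace ℝ V] [FiniteDimensional ℝ V]
    (D : PseudoFinslerData V) (𝒱 : Submodule ℝ V)
    (hVnd : ∀ v ∈ D.A, ∀ w ∈ 𝒱, (∀ u ∈ 𝒱, D.g v w u = 0) → w = 0)
    (top : V → V → V)
    (htop_mem : ∀ v ∈ D.A, ∀ e : V, top v e ∈ 𝒱)
    (htop_perp : ∀ v ∈ D.A, ∀ e : V, ∀ w ∈ 𝒱, D.g v (e - top v e) w = 0)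
    (Cs : V → V → V → V)
    (hCs : ∀ v ∈ D.A, ∀ e h b : V, D.g v b (Cs v e h) = D.Cartan v b e h)
    (W : Type*) [NormedAddCommGroup W] [NormedSpace ℝ W] [FiniteDimensional ℝ W]
    (ι : W →L[ℝ] V) (hι1 : ∀ x : W, ι x ∈ 𝒱) (hι2 : ∀ y ∈ 𝒱, ∃ x : W, ι x = y)
    (hι3 : Function.Injective ι)
    (v : V) (hv : v ∈ D.A) (e h : V) :
      HasDerivAt (fun t : ℝ => top (v + t • h) e)
        ((2 : ℝ) • top v (Cs v (e - top v e) h)) 0 ∧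
      HasDerivAt (fun t : ℝ => e - top (v + t • h) e)
        (-((2 : ℝ) • top v (Cs v (e - top v e) h))) 0 ∧
      (e ∈ 𝒱 →
        HasDerivAt (fun t : ℝ => top (v + t • h) e) 0 0 ∧
        HasDerivAt (fun t : ℝ => e - top (v + t • h) e) 0 0) := by
  classical
  let r1 : (V →L[ℝ] ℝ) →L[ℝ] (W →L[ℝ] ℝ) :=
    (ContinuousLinearMap.compSL W V ℝ (RingHom.id ℝ) (RingHom.id ℝ)).flip ι
  let r2 : (V →L[ℝ] V →L[ℝ] ℝ) →L[ℝ] (W →L[ℝ] W →L[ℝ] ℝ) :=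
    ((ContinuousLinearMap.compSL W (V →L[ℝ] ℝ) (W →L[ℝ] ℝ) (RingHom.id ℝ)
        (RingHom.id ℝ)) r1).comp
      ((ContinuousLinearMap.compSL W V (V →L[ℝ] ℝ) (RingHom.id ℝ) (RingHom.id ℝ)).flip ι)
  have r1_apply : ∀ (φ : V →L[ℝ] ℝ) (w : W), r1 φ w = φ (ι w) := fun _ _ => rfl
  have r2_apply : ∀ (B : V →L[ℝ] V →L[ℝ] ℝ) (w w' : W), r2 B w w' = B (ι w) (ι w') :=
    fun _ _ _ => rfl
  have hr1cd : ContDiff ℝ ((⊤ : ℕ∞) : WithTop ℕ∞) r1 := r1.contDiff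
  have hr2cd : ContDiff ℝ ((⊤ : ℕ∞) : WithTop ℕ∞) r2 := by apply ContinuousLinearMap.contDiff
  set Td : V → (W →L[ℝ] W →L[ℝ] ℝ) := fun u => r2 (L2 D u) with hTddef
  set cD : V → (W →L[ℝ] ℝ) := fun u => r1 (L2 D u e) with hcDdef
  -- injectivity of Td u for u ∈ A
  have hTdinj : ∀ u ∈ D.A, Function.Injective (Td u) := by
    intro u hu
    refine (injective_iff_map_eq_zero (Td u)).mpr ?_
    intro w hw0
    have hz : ∀ u' ∈ 𝒱, D.g u (ι w) u' = 0 := by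
      intro u' hu'
      obtain ⟨w', hw'⟩ := hι2 u' hu'
      have h1 : Td u w w' = 0 := by rw [hw0]; rfl
      have h1' : L2 D u (ι w) (ι w') = 0 := h1
      rw [← hw', g_eq hu, h1', mul_zero]
    exact hι3 (by simpa using hVnd u hu (ι w) (hι1 w) hz)
  haveI : FiniteDimensional ℝ (W →L[ℝ] ℝ) :=
    (LinearMap.toContinuousLinearMap (𝕜 := ℝ) (E := W) (F' := ℝ)).finiteDimensional
  have hfr : Module.finrank ℝ W = Module.finrank ℝ (W →L[ℝ] ℝ) := by
    rw [← (LinearMap.toContinuousLinearMap (𝕜 := ℝ) (E := W) (F' := ℝ)).finrank_eq]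
    exact (Subspace.dual_finrank_eq (K := ℝ) (V := W)).symm
  have hTdbij : ∀ u ∈ D.A, Function.Bijective (Td u) := by
    intro u hu
    exact ⟨hTdinj u hu,
      (LinearMap.injective_iff_surjective_of_finrank_eq_finrank hfr
        (f := (Td u : W →ₗ[ℝ] (W →L[ℝ] ℝ)))).mp (hTdinj u hu)⟩
  let EE : ∀ u, u ∈ D.A → (W ≃L[ℝ] (W →L[ℝ] ℝ)) := fun u hu =>
    LinearEquiv.toContinuousLinearEquiv
      (LinearEquiv.ofBijective (Td u : W →ₗ[ℝ] (W →L[ℝ] ℝ)) (hTdbij u hu))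
  have hcoe : ∀ (u) (hu : u ∈ D.A), ((EE u hu : W ≃L[ℝ] (W →L[ℝ] ℝ)) : W →L[ℝ] (W →L[ℝ] ℝ))
      = Td u := by
    intro u hu; ext w; rfl
  have hinv_eq : ∀ (u) (hu : u ∈ D.A),
      ContinuousLinearMap.inverse (Td u) = ((EE u hu).symm : (W →L[ℝ] ℝ) →L[ℝ] W) := by
    intro u hu
    rw [← hcoe u hu, ContinuousLinearMap.inverse_equiv]
  set G : V → V := fun u => ι (ContinuousLinearMap.inverse (Td u) (cD u)) with hGdef
  have hGmem : ∀ u, G u ∈ 𝒱 := by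
    intro u; simp only [hGdef]; exact hι1 _
  -- G agrees with top on A
  have hGA : ∀ u ∈ D.A, G u = top u e := by
    intro u hu
    set x : W := (EE u hu).symm (cD u) with hx
    have hGx : G u = ι x := by simp only [hGdef]; rw [hinv_eq u hu, hx]; rfl
    have hTx : Td u x = cD u := by
      rw [← hcoe u hu]; exact (EE u hu).apply_symm_apply (cD u)
    have hpt : ∀ w ∈ 𝒱, D.g u (ι x) w = D.g u e w := by
      intro w hw
      obtain ⟨w', hw'⟩ := hι2 w hw
      have h1 : Td u x w' = cD u w' := by rw [hTx]
      have h1' : L2 D u (ι x) (ι w') = L2 D u e (ι w') := h1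
      rw [← hw', g_eq hu, g_eq hu, h1']
    have hmem : top u e - ι x ∈ 𝒱 := sub_mem (htop_mem u hu e) (hι1 x)
    have hzero : ∀ w ∈ 𝒱, D.g u (top u e - ι x) w = 0 := by
      intro w hw
      have h1 := htop_perp u hu e w hw
      have h2 := hpt w hw
      simp only [map_sub, LinearMap.sub_apply] at h1 ⊢
      linarith
    have := hVnd u hu _ hmem hzero
    rw [hGx]
    exact (sub_eq_zero.mp this).symm
  -- differentiability of G at v
  have hL2at : ContDiffAt ℝ ((⊤ : ℕ∞) : WithTop ℕ∞) (L2 D) v :=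
    L2_cd.contDiffAt (D.A_open.mem_nhds hv)
  have hTdat : ContDiffAt ℝ ((⊤ : ℕ∞) : WithTop ℕ∞) Td v := by
    rw [hTddef]; exact hr2cd.comp_contDiffAt v hL2at
  have hcDat : ContDiffAt ℝ ((⊤ : ℕ∞) : WithTop ℕ∞) cD v := by
    rw [hcDdef]
    have happ : ContDiff ℝ ((⊤ : ℕ∞) : WithTop ℕ∞) (ContinuousLinearMap.apply ℝ (V →L[ℝ] ℝ) e) := by
      apply ContinuousLinearMap.contDiff
    have h1 : ContDiffAt ℝ ((⊤ : ℕ∞) : WithTop ℕ∞) (fun u => (L2 D u) e) v :=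
      happ.comp_contDiffAt v hL2at
    exact hr1cd.comp_contDiffAt v h1
  have hinvat : ContDiffAt ℝ ((⊤ : ℕ∞) : WithTop ℕ∞)
      (fun u => ContinuousLinearMap.inverse (Td u)) v := by
    have h1 : ContDiffAt ℝ ((⊤ : ℕ∞) : WithTop ℕ∞) ContinuousLinearMap.inverse (Td v) := by
      rw [← hcoe v hv]; exact contDiffAt_map_inverse (EE v hv)
    exact h1.comp v hTdat
  have hGat : ContDiffAt ℝ ((⊤ : ℕ∞) : WithTop ℕ∞) G v := by
    have h1 : ContDiffAt ℝ ((⊤ : ℕ∞) : WithTop ℕ∞)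
        (fun u => ContinuousLinearMap.inverse (Td u) (cD u)) v := hinvat.clm_apply hcDat
    rw [hGdef]
    exact (ι.contDiff).comp_contDiffAt v h1
  have hGdiff : DifferentiableAt ℝ G v := hGat.differentiableAt (by simp)
  have hline : ∀ᶠ t : ℝ in 𝓝 0, v + t • h ∈ D.A := eventually_mem hv h
  have hFG : (fun t : ℝ => top (v + t • h) e) =ᶠ[𝓝 0] fun t : ℝ => G (v + t • h) := by
    filter_upwards [hline] with t ht using (hGA _ ht).symm
  have hlineD : HasDerivAt (fun t : ℝ => v + t • h) h 0 := by
    simpa using ((hasDerivAt_id (0 : ℝ)).smul_const h).const_add v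
  have hFdiff : DifferentiableAt ℝ (fun t : ℝ => G (v + t • h)) 0 := by
    have h0 : DifferentiableAt ℝ G ((fun t : ℝ => v + t • h) 0) := by simpa using hGdiff
    exact DifferentiableAt.comp (g := G) 0 h0 hlineD.differentiableAt
  set d := deriv (fun t : ℝ => G (v + t • h)) 0 with hd
  have hF : HasDerivAt (fun t : ℝ => G (v + t • h)) d 0 := hFdiff.hasDerivAt
  -- d lies in 𝒱
  have hdmem : d ∈ 𝒱 := by
    have hclosed : IsClosed (𝒱 : Set V) := Submodule.closed_of_finiteDimensional 𝒱
    have hs := hasDerivAt_iff_tendsto_slope.mp hF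
    refine hclosed.mem_of_tendsto hs ?_
    refine Filter.Eventually.of_forall fun t => ?_
    rw [slope_def_module]
    exact 𝒱.smul_mem _ (𝒱.sub_mem (hGmem _) (hGmem _))
  -- the key identity
  have hGv : G v = top v e := hGA v hv
  have hkey : ∀ w ∈ 𝒱, L2 D v d w = L3 D v h (e - top v e) w := by
    intro w hw
    have hA := (hasDerivAt_L2_apply hv h e w).const_mul (1/2 : ℝ)
    have hc : HasDerivAt (fun t : ℝ => L2 D (v + t • h)) (L3 D v h) 0 :=
      comp_line (F' := V →L[ℝ] V →L[ℝ] ℝ) (f := L2 D) (f' := L3 D v) (hasF_L2 hv) h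
    have hB0 := (hc.clm_apply hF).clm_apply (hasDerivAt_const (0 : ℝ) w)
    have hB1 : HasDerivAt (fun t : ℝ => L2 D (v + t • h) (G (v + t • h)) w)
        (L3 D v h (G v) w + L2 D v d w) 0 := by
      simpa [ContinuousLinearMap.add_apply] using hB0
    have hB := hB1.const_mul (1/2 : ℝ)
    have hφ := hA.sub hB
    have hzero : (fun t : ℝ => (1/2 : ℝ) * L2 D (v + t • h) e w
        - (1/2 : ℝ) * (L2 D (v + t • h) (G (v + t • h)) w)) =ᶠ[𝓝 0] fun _ => (0 : ℝ) := by
      filter_upwards [hline] with t ht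
      rw [hGA _ ht]
      have h1 := g_eq ht e w
      have h2 := g_eq ht (top (v + t • h) e) w
      have h3 := htop_perp _ ht e w hw
      simp only [map_sub, LinearMap.sub_apply] at h3
      linarith
    have hval : (0 : ℝ) = (1/2 : ℝ) * L3 D v h e w
        - (1/2 : ℝ) * (L3 D v h (G v) w + L2 D v d w) :=
      ((hasDerivAt_const (0 : ℝ) (0 : ℝ)).congr_of_eventuallyEq hzero).unique hφ
    have h4 : L3 D v h (e - top v e) w = L3 D v h e w - L3 D v h (top v e) w := by
      simp [map_sub, ContinuousLinearMap.sub_apply]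
    rw [hGv] at hval
    linarith
  -- translate to g and Cartan
  have hgd : ∀ w ∈ 𝒱, D.g v d w = 2 * D.g v (Cs v (e - top v e) h) w := by
    intro w hw
    have h1 : D.g v d w = (1/2 : ℝ) * L2 D v d w := g_eq hv d w
    have h2 := hkey w hw
    have h3 : L3 D v h (e - top v e) w = L3 D v w (e - top v e) h := by
      have s1 : L3 D v h (e - top v e) w = L3 D v (e - top v e) h w :=
        DFunLike.congr_fun (L3_symm12 hv h (e - top v e)) w
      have s2 : L3 D v (e - top v e) h w = L3 D v (e - top v e) w h :=
        L3_symm23 hv (e - top v e) h w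
      have s3 : L3 D v (e - top v e) w h = L3 D v w (e - top v e) h :=
        DFunLike.congr_fun (L3_symm12 hv (e - top v e) w) h
      rw [s1, s2, s3]
    have h4 := Cartan_eq hv w (e - top v e) h
    have h5 := hCs v hv (e - top v e) h w
    have h6 := D.g_symm v hv (Cs v (e - top v e) h) w
    rw [h1, h2, h3, h6, h5, h4]
    ring
  have hP : ∀ w ∈ 𝒱, D.g v (d - (2 : ℝ) • top v (Cs v (e - top v e) h)) w = 0 := by
    intro w hw
    have h1 := hgd w hw
    have h2 := htop_perp v hv (Cs v (e - top v e) h) w hw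
    simp only [map_sub, map_smul, LinearMap.sub_apply, LinearMap.smul_apply,
      smul_eq_mul] at h1 h2 ⊢
    linarith
  have hdeq : d = (2 : ℝ) • top v (Cs v (e - top v e) h) := by
    have hmem : d - (2 : ℝ) • top v (Cs v (e - top v e) h) ∈ 𝒱 :=
      sub_mem hdmem (𝒱.smul_mem _ (htop_mem v hv _))
    exact sub_eq_zero.mp (hVnd v hv _ hmem hP)
  have htopD : HasDerivAt (fun t : ℝ => top (v + t • h) e)
      ((2 : ℝ) • top v (Cs v (e - top v e) h)) 0 := by
    have h1 := hF
    rw [hdeq] at h1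
    exact h1.congr_of_eventuallyEq hFG
  have htopD2 : HasDerivAt (fun t : ℝ => e - top (v + t • h) e)
      (-((2 : ℝ) • top v (Cs v (e - top v e) h))) 0 := by
    have := (hasDerivAt_const (0 : ℝ) e).sub htopD
    rw [zero_sub] at this; exact this
  refine ⟨htopD, htopD2, ?_⟩
  intro he
  have htopv : top v e = e := by
    have hm : e - top v e ∈ 𝒱 := sub_mem he (htop_mem v hv e)
    have := hVnd v hv _ hm (fun w hw => htop_perp v hv e w hw)
    exact (sub_eq_zero.mp this).symm
  have hCs0 : Cs v (e - top v e) h = 0 := by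
    have he0 : e - top v e = 0 := by rw [htopv, sub_self]
    rw [he0]
    refine D.g_nondeg v hv _ fun b => ?_
    rw [D.g_symm v hv _ b, hCs v hv 0 h b, Cartan_eq hv b 0 h]
    simp
  have htop0 : top v (0 : V) = 0 := by
    have hm : top v 0 ∈ 𝒱 := htop_mem v hv 0
    have hz : ∀ w ∈ 𝒱, D.g v (top v 0) w = 0 := by
      intro w hw
      have := htop_perp v hv 0 w hw
      simp only [zero_sub, map_neg, LinearMap.neg_apply, neg_eq_zero] at this
      exact this
    exact hVnd v hv _ hm hz
  have hzero2 : (2 : ℝ) • top v (Cs v (e - top v e) h) = 0 := by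
    rw [hCs0, htop0, smul_zero]
  exact ⟨hzero2 ▸ htopD, by simpa [hzero2] using htopD2⟩

/-- the fiber derivatives of the vertical and horizontal projections exist
and satisfy `d/dt|₀ e^⊤_{v+th} = 2 (C♯_v(e^⊥_v,h))^⊤_v` and
`d/dt|₀ e^⊥_{v+th} = −2 (C♯_v(e^⊥_v,h))^⊤_v`; in particular both vanish when `e ∈ 𝒱`.
Here `top` is the vertical projection of the `g`-orthogonal decomposition with respect
to `𝒱` (so `e^⊥_v = e - top v e`) and `Cs` is the metrically equivalent Cartan tensor
`g_v(b, C♯_v(e,h)) = C_v(b,e,h)`. -/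
theorem stmt5 {V : Type*}
    [NormedAddCommGroup V] [NormedSpace ℝ V] [FiniteDimensional ℝ V]
    (D : PseudoFinslerData V) (𝒱 : Submodule ℝ V)
    (hVnd : ∀ v ∈ D.A, ∀ w ∈ 𝒱, (∀ u ∈ 𝒱, D.g v w u = 0) → w = 0)
    (top : V → V → V)
    (htop_mem : ∀ v ∈ D.A, ∀ e : V, top v e ∈ 𝒱)
    (htop_perp : ∀ v ∈ D.A, ∀ e : V, ∀ w ∈ 𝒱, D.g v (e - top v e) w = 0)
    (Cs : V → V → V → V)
    (hCs : ∀ v ∈ D.A, ∀ e h b : V, D.g v b (Cs v e h) = D.Cartan v b e h) :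
    ∀ v ∈ D.A, ∀ e h : V,
      HasDerivAt (fun t : ℝ => top (v + t • h) e)
        ((2 : ℝ) • top v (Cs v (e - top v e) h)) 0 ∧
      HasDerivAt (fun t : ℝ => e - top (v + t • h) e)
        (-((2 : ℝ) • top v (Cs v (e - top v e) h))) 0 ∧
      (e ∈ 𝒱 →
        HasDerivAt (fun t : ℝ => top (v + t • h) e) 0 0 ∧
        HasDerivAt (fun t : ℝ => e - top (v + t • h) e) 0 0) := by
  intro v hv e h
  exact PFmain D 𝒱 hVnd top htop_mem htop_perp Cs hCs ↥𝒱 𝒱.subtypeL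
    (fun x => x.2) (fun y hy => ⟨⟨y, hy⟩, rfl⟩)
    (fun a b hab => Subtype.ext hab) v hv e h
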